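/- arXiv:1503.08807 — 6 statements merged into one kernel-verified Lean document; each statement's English description precedes it below -/
import Mathlib

section
/- Let c : ℝ → ℝ be smooth and everywhere positive, let Ω ⊆ ℝ² be open, and let u : Ω → ℝ be a C³ function of the variables (x,t) solving the nonlinear wave equation u_tt = c(u)·(c(u)·u_x)_x on Ω. Define R = u_t + c(u)·u_x and S = u_t − c(u)·u_x. Then on Ω the balance laws ∂_t(R²) − ∂_x(c(u)·R²) = (c'(u)/(2c(u)))·(R²·S − R·S²) and ∂_t(S²) + ∂_x(c(u)·S²) = (c'(u)/(2c(u)))·(S²·R − S·R²) hold. -/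
/-- Partial derivative in the first (space) variable `x`. -/
noncomputable def dx1 (f : ℝ × ℝ → ℝ) (P : ℝ × ℝ) : ℝ := fderiv ℝ f P (1, 0)

/-- Partial derivative in the second (time) variable `t`. -/
noncomputable def dt2 (f : ℝ × ℝ → ℝ) (P : ℝ × ℝ) : ℝ := fderiv ℝ f P (0, 1)

/-!
Expanding `R_t - c(u) R_x`, the mixed partials `u_xt = u_tx` cancel and the wave equation leaves
`R_t - c(u) R_x = c'(u) u_t u_x`. Multiplying by `2R` and subtracting `(c(u))_x R² = c'(u) u_x R²`
gives `c'(u) u_x R S`, which is the claimed right-hand side since `R - S = 2 c(u) u_x`.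
Replacing `c` by `-c` preserves the wave equation and `c'/(2c)` and exchanges `R` and `S`, so the
law for `S²` is the law for `R²` written for `-c`.
-/

section DirectionalDerivatives

variable {E : Type*} [NormedAddCommGroup E] [NormedSpace ℝ E] {f g : E → ℝ} {x : E}

theorem fderiv_fun_mul_apply (hf : DifferentiableAt ℝ f x) (hg : DifferentiableAt ℝ g x)
    (v : E) :
    fderiv ℝ (fun y => f y * g y) x v = fderiv ℝ f x v * g x + f x * fderiv ℝ g x v := by
  rw [fderiv_fun_mul hf hg]
  simp only [add_apply, smul_apply, smul_eq_mul]
  ring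

theorem fderiv_fun_sq_apply (hf : DifferentiableAt ℝ f x) (v : E) :
    fderiv ℝ (fun y => f y ^ 2) x v = 2 * f x * fderiv ℝ f x v := by
  simp only [sq, fderiv_fun_mul_apply hf hf]
  ring

theorem fderiv_comp_apply_eq_deriv_mul {c : ℝ → ℝ} (hc : DifferentiableAt ℝ c (f x))
    (hf : DifferentiableAt ℝ f x) (v : E) :
    fderiv ℝ (fun y => c (f y)) x v = deriv c (f x) * fderiv ℝ f x v := by
  rw [← Function.comp_def, (hc.hasDerivAt.comp_hasFDerivAt x hf.hasFDerivAt).fderiv]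
  rfl

theorem fderiv_fderiv_apply (hf : DifferentiableAt ℝ (fderiv ℝ f) x) (v w : E) :
    fderiv ℝ (fun y => fderiv ℝ f y v) x w = fderiv ℝ (fderiv ℝ f) x w v := by
  rw [fderiv_clm_apply hf (differentiableAt_const v)]
  simp

theorem ContDiffAt.fderiv_fderiv_apply_comm (hf : ContDiffAt ℝ 2 f x) (v w : E) :
    fderiv ℝ (fun y => fderiv ℝ f y v) x w = fderiv ℝ (fun y => fderiv ℝ f y w) x v := by
  have hf' : DifferentiableAt ℝ (fderiv ℝ f) x :=
    (hf.fderiv_right le_rfl).differentiableAt one_ne_zero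
  rw [fderiv_fderiv_apply hf', fderiv_fderiv_apply hf', hf.isSymmSndFDerivAt (by simp)]

theorem ContDiffAt.differentiableAt_fderiv_apply (hf : ContDiffAt ℝ 2 f x) (v : E) :
    DifferentiableAt ℝ (fun y => fderiv ℝ f y v) x :=
  ((hf.fderiv_right le_rfl).differentiableAt one_ne_zero).clm_apply (differentiableAt_const v)

end DirectionalDerivatives

noncomputable def riemannVar (c : ℝ → ℝ) (u : ℝ × ℝ → ℝ) : ℝ × ℝ → ℝ :=
  fun Q => dt2 u Q + c (u Q) * dx1 u Q

section WaveEquation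

variable {c : ℝ → ℝ} {u : ℝ × ℝ → ℝ} {P : ℝ × ℝ}

theorem differentiableAt_riemannVar (hc : DifferentiableAt ℝ c (u P))
    (hu : ContDiffAt ℝ 2 u P) :
    DifferentiableAt ℝ (riemannVar c u) P :=
  (hu.differentiableAt_fderiv_apply _).add <|
    (hc.comp P (hu.differentiableAt two_ne_zero)).mul (hu.differentiableAt_fderiv_apply _)

theorem dt2_sub_mul_dx1_riemannVar (hc : DifferentiableAt ℝ c (u P)) (hu : ContDiffAt ℝ 2 u P)
    (hpde : dt2 (dt2 u) P = c (u P) * dx1 (fun Q => c (u Q) * dx1 u Q) P) :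
    dt2 (riemannVar c u) P - c (u P) * dx1 (riemannVar c u) P
      = deriv c (u P) * dt2 u P * dx1 u P := by
  have hu₁ := hu.differentiableAt two_ne_zero
  have hcu : DifferentiableAt ℝ (fun Q => c (u Q)) P := hc.comp P hu₁
  have hux := hu.differentiableAt_fderiv_apply (1, 0)
  have hut := hu.differentiableAt_fderiv_apply (0, 1)
  have hmixed := hu.fderiv_fderiv_apply_comm (1, 0) (0, 1)
  unfold riemannVar
  unfold dx1 dt2 at hpde ⊢
  rw [fderiv_fun_add hut (hcu.fun_mul hux)]
  simp only [add_apply, fderiv_fun_mul_apply hcu hux, fderiv_comp_apply_eq_deriv_mul hc hu₁]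
    at hpde ⊢
  linear_combination hpde + c (u P) * hmixed

theorem balance_law_riemannVar (hc : DifferentiableAt ℝ c (u P)) (hc₀ : c (u P) ≠ 0)
    (hu : ContDiffAt ℝ 2 u P)
    (hpde : dt2 (dt2 u) P = c (u P) * dx1 (fun Q => c (u Q) * dx1 u Q) P) :
    dt2 (fun Q => riemannVar c u Q ^ 2) P - dx1 (fun Q => c (u Q) * riemannVar c u Q ^ 2) P
      = deriv c (u P) / (2 * c (u P)) *
        (riemannVar c u P ^ 2 * riemannVar (-c) u P
          - riemannVar c u P * riemannVar (-c) u P ^ 2) := by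
  have hu₁ := hu.differentiableAt two_ne_zero
  have hcu : DifferentiableAt ℝ (fun Q => c (u Q)) P := hc.comp P hu₁
  have hR := differentiableAt_riemannVar hc hu
  have htransport := dt2_sub_mul_dx1_riemannVar hc hu hpde
  have hsum : riemannVar c u P + riemannVar (-c) u P = 2 * dt2 u P := by
    simp only [riemannVar, Pi.neg_apply]
    ring
  have hdiff : riemannVar c u P - riemannVar (-c) u P = 2 * c (u P) * dx1 u P := by
    simp only [riemannVar, Pi.neg_apply]
    ring
  set R := riemannVar c u
  set S := riemannVar (-c) u
  calc dt2 (fun Q => R Q ^ 2) P - dx1 (fun Q => c (u Q) * R Q ^ 2) P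
      = 2 * R P * (dt2 R P - c (u P) * dx1 R P) - deriv c (u P) * dx1 u P * R P ^ 2 := by
        simp only [dx1, dt2, fderiv_fun_mul_apply hcu (hR.fun_pow 2), fderiv_fun_sq_apply hR,
          fderiv_comp_apply_eq_deriv_mul hc hu₁]
        ring
    _ = deriv c (u P) * dx1 u P * R P * S P := by
        rw [htransport]
        linear_combination -(deriv c (u P) * dx1 u P * R P) * hsum
    _ = deriv c (u P) / (2 * c (u P)) * (R P ^ 2 * S P - R P * S P ^ 2) := by
        field_simp
        linear_combination (-(deriv c (u P)) * R P * S P) * hdiff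

theorem dx1_neg_comp_mul (g : ℝ × ℝ → ℝ) :
    dx1 (fun Q => (-c) (u Q) * g Q) P = -dx1 (fun Q => c (u Q) * g Q) P := by
  simp only [dx1, Pi.neg_apply, neg_mul, fderiv_fun_neg, neg_apply]

theorem balance_law_riemannVar_neg (hc : DifferentiableAt ℝ c (u P)) (hc₀ : c (u P) ≠ 0)
    (hu : ContDiffAt ℝ 2 u P)
    (hpde : dt2 (dt2 u) P = c (u P) * dx1 (fun Q => c (u Q) * dx1 u Q) P) :
    dt2 (fun Q => riemannVar (-c) u Q ^ 2) P + dx1 (fun Q => c (u Q) * riemannVar (-c) u Q ^ 2) P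
      = deriv c (u P) / (2 * c (u P)) *
        (riemannVar (-c) u P ^ 2 * riemannVar c u P
          - riemannVar (-c) u P * riemannVar c u P ^ 2) := by
  have hpde_neg : dt2 (dt2 u) P = (-c) (u P) * dx1 (fun Q => (-c) (u Q) * dx1 u Q) P := by
    rw [dx1_neg_comp_mul, Pi.neg_apply, neg_mul_neg]
    exact hpde
  have h := balance_law_riemannVar hc.neg (neg_ne_zero.2 hc₀) hu hpde_neg
  rwa [neg_neg, dx1_neg_comp_mul, sub_neg_eq_add, deriv.neg, Pi.neg_apply, mul_neg,
    neg_div_neg_eq] at h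

end WaveEquation

/-- the balance laws for `R² ` and `S²` for a `C³` solution of the
nonlinear wave equation `u_tt = c(u)(c(u) u_x)_x` on an open set `Ω`. -/
theorem balance_laws_for_wave_equation
    (c : ℝ → ℝ) (hc : ContDiff ℝ (⊤ : ℕ∞) c) (hcpos : ∀ v, 0 < c v)
    (Ω : Set (ℝ × ℝ)) (hΩ : IsOpen Ω)
    (u : ℝ × ℝ → ℝ) (hu : ContDiffOn ℝ 3 u Ω)
    (hpde : ∀ P ∈ Ω, dt2 (dt2 u) P = c (u P) * dx1 (fun Q => c (u Q) * dx1 u Q) P)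
    (R S : ℝ × ℝ → ℝ)
    (hR : ∀ P, R P = dt2 u P + c (u P) * dx1 u P)
    (hS : ∀ P, S P = dt2 u P - c (u P) * dx1 u P) :
    ∀ P ∈ Ω,
      dt2 (fun Q => R Q ^ 2) P - dx1 (fun Q => c (u Q) * R Q ^ 2) P
        = deriv c (u P) / (2 * c (u P)) * (R P ^ 2 * S P - R P * S P ^ 2) ∧
      dt2 (fun Q => S Q ^ 2) P + dx1 (fun Q => c (u Q) * S Q ^ 2) P
        = deriv c (u P) / (2 * c (u P)) * (S P ^ 2 * R P - S P * R P ^ 2) := by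
  intro P hP
  obtain rfl : R = riemannVar c u := funext hR
  obtain rfl : S = riemannVar (-c) u := funext fun Q => by
    rw [hS, riemannVar, Pi.neg_apply, neg_mul, sub_eq_add_neg]
  have hcu : DifferentiableAt ℝ c (u P) := hc.differentiable (by simp) (u P)
  have huP : ContDiffAt ℝ 2 u P := (hu.contDiffAt (hΩ.mem_nhds hP)).of_le (by norm_num)
  exact ⟨balance_law_riemannVar hcu (hcpos _).ne' huP (hpde P hP),
    balance_law_riemannVar_neg hcu (hcpos _).ne' huP (hpde P hP)⟩
end

section
/- Let c : ℝ → ℝ be smooth with c(v) ≥ c₀ > 0, and let u, w, z, p, q, x, t : ℝ² → ℝ be smooth functions solving the semilinear system. Let (X₀,Y₀) ∈ ℝ² be a point where cos w(X₀,Y₀) > −1, cos z(X₀,Y₀) > −1, p(X₀,Y₀) > 0 and q(X₀,Y₀) > 0. Then the map Λ(X,Y) = (x(X,Y), t(X,Y)) is a local C^∞ diffeomorphism at (X₀,Y₀): there is an open neighborhood U of (X₀,Y₀) such that Λ is injective on U, Λ(U) is open, and the inverse map Λ(U) → U is smooth. -/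
/-!
The Jacobian determinant of `Λ = (x, t)` is `x_X t_Y - x_Y t_X = (1 + cos w) p (1 + cos z) q / (8 c(u))`,
which is positive at `(X₀, Y₀)`. The inverse function theorem then gives a local inverse; since
invertibility of the derivative is an open condition, the neighbourhood can be shrunk so that the
derivative is invertible everywhere on it, and the inverse is smooth on the whole image.
-/

/-- Partial derivative in the `X`-direction. -/
noncomputable def dX (f : ℝ × ℝ → ℝ) (P : ℝ × ℝ) : ℝ := fderiv ℝ f P (1, 0)

/-- Partial derivative in the `Y`-direction. -/
noncomputable def dY (f : ℝ × ℝ → ℝ) (P : ℝ × ℝ) : ℝ := fderiv ℝ f P (0, 1)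

/-- The semilinear system associated with the wave equation
`u_tt - c(u)(c(u)u_x)_x = 0`, in characteristic coordinates `(X,Y)`. -/
def SolvesSystem (c : ℝ → ℝ) (u w z p q x t : ℝ × ℝ → ℝ) : Prop :=
  ∀ P : ℝ × ℝ,
    dX u P = Real.sin (w P) * p P / (4 * c (u P)) ∧
    dY u P = Real.sin (z P) * q P / (4 * c (u P)) ∧
    dY w P = deriv c (u P) / (8 * c (u P) ^ 2) * (Real.cos (z P) - Real.cos (w P)) * q P ∧
    dX z P = deriv c (u P) / (8 * c (u P) ^ 2) * (Real.cos (w P) - Real.cos (z P)) * p P ∧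
    dY p P = deriv c (u P) / (8 * c (u P) ^ 2) * (Real.sin (z P) - Real.sin (w P)) * (p P * q P) ∧
    dX q P = deriv c (u P) / (8 * c (u P) ^ 2) * (Real.sin (w P) - Real.sin (z P)) * (p P * q P) ∧
    dX x P = (1 + Real.cos (w P)) * p P / 4 ∧
    dY x P = -((1 + Real.cos (z P)) * q P) / 4 ∧
    dX t P = (1 + Real.cos (w P)) * p P / (4 * c (u P)) ∧
    dY t P = (1 + Real.cos (z P)) * q P / (4 * c (u P))

/-- All seven components are smooth on the whole plane. -/
def Smooth7 (u w z p q x t : ℝ × ℝ → ℝ) : Prop :=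
  ContDiff ℝ (⊤ : ℕ∞) u ∧ ContDiff ℝ (⊤ : ℕ∞) w ∧ ContDiff ℝ (⊤ : ℕ∞) z ∧
  ContDiff ℝ (⊤ : ℕ∞) p ∧ ContDiff ℝ (⊤ : ℕ∞) q ∧ ContDiff ℝ (⊤ : ℕ∞) x ∧
  ContDiff ℝ (⊤ : ℕ∞) t

open Set

theorem ContDiff.exists_local_contDiff_inverse {𝕂 E F : Type*} [RCLike 𝕂]
    [NormedAddCommGroup E] [NormedSpace 𝕂 E] [CompleteSpace E]
    [NormedAddCommGroup F] [NormedSpace 𝕂 F]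
    {n : WithTop ℕ∞} {f : E → F} {f' : E ≃L[𝕂] F} {a : E}
    (hf : ContDiff 𝕂 n f) (hn : n ≠ 0) (hf' : HasFDerivAt f (f' : E →L[𝕂] F) a) :
    ∃ U : Set E, IsOpen U ∧ a ∈ U ∧ InjOn f U ∧ IsOpen (f '' U) ∧
      ∃ g : F → E, ContDiffOn 𝕂 n g (f '' U) ∧ ∀ P ∈ U, g (f P) = P := by
  set Φ := hf.contDiffAt.toOpenPartialHomeomorph f hf' hn
  set U := Φ.source ∩ fderiv 𝕂 f ⁻¹' range ((↑) : (E ≃L[𝕂] F) → E →L[𝕂] F)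
  have hU : IsOpen U :=
    Φ.open_source.inter (ContinuousLinearEquiv.isOpen.preimage (hf.continuous_fderiv hn))
  refine ⟨U, hU,
    ⟨hf.contDiffAt.mem_toOpenPartialHomeomorph_source hf' hn, f', hf'.fderiv.symm⟩,
    Φ.injOn.mono inter_subset_left, Φ.isOpen_image_of_subset_source hU inter_subset_left,
    Φ.symm, ?_, fun P hP => Φ.left_inv hP.1⟩
  rintro _ ⟨P, ⟨hPΦ, e, he⟩, rfl⟩
  have hPe : HasFDerivAt f (e : E →L[𝕂] F) (Φ.symm (f P)) := by
    rw [show Φ.symm (f P) = P from Φ.left_inv hPΦ, he]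
    exact (hf.differentiable hn P).hasFDerivAt
  exact (Φ.contDiffAt_symm (Φ.map_source hPΦ) hPe hf.contDiffAt).contDiffWithinAt

theorem fderiv_apply_eq_dX_dY (f : ℝ × ℝ → ℝ) (P v : ℝ × ℝ) :
    fderiv ℝ f P v = v.1 * dX f P + v.2 * dY f P := by
  have hv : v = v.1 • ((1 : ℝ), (0 : ℝ)) + v.2 • ((0 : ℝ), (1 : ℝ)) := by ext <;> simp
  conv_lhs => rw [hv]
  simp only [map_add, map_smul, smul_eq_mul, dX, dY]

theorem exists_equiv_eq_fderiv_prod_of_det_ne_zero (f g : ℝ × ℝ → ℝ) (P : ℝ × ℝ)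
    (hdet : dX f P * dY g P - dY f P * dX g P ≠ 0) :
    ∃ e : (ℝ × ℝ) ≃L[ℝ] ℝ × ℝ,
      (e : (ℝ × ℝ) →L[ℝ] ℝ × ℝ) = (fderiv ℝ f P).prod (fderiv ℝ g P) := by
  set L := (fderiv ℝ f P).prod (fderiv ℝ g P)
  have hinj : Function.Injective (L : (ℝ × ℝ) →ₗ[ℝ] ℝ × ℝ) := by
    rw [← LinearMap.ker_eq_bot, LinearMap.ker_eq_bot']
    intro v hv
    have h1 : v.1 * dX f P + v.2 * dY f P = 0 := by
      rw [← fderiv_apply_eq_dX_dY]; exact congrArg Prod.fst hv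
    have h2 : v.1 * dX g P + v.2 * dY g P = 0 := by
      rw [← fderiv_apply_eq_dX_dY]; exact congrArg Prod.snd hv
    -- Cramer's rule
    have hv1 : v.1 * (dX f P * dY g P - dY f P * dX g P) = 0 := by
      linear_combination dY g P * h1 - dY f P * h2
    have hv2 : v.2 * (dX f P * dY g P - dY f P * dX g P) = 0 := by
      linear_combination dX f P * h2 - dX g P * h1
    exact Prod.ext ((mul_eq_zero.1 hv1).resolve_right hdet)
      ((mul_eq_zero.1 hv2).resolve_right hdet)
  exact ⟨(LinearEquiv.ofInjectiveEndo _ hinj).toContinuousLinearEquiv, rfl⟩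

theorem SolvesSystem.dX_mul_dY_sub_dY_mul_dX {c : ℝ → ℝ} {u w z p q x t : ℝ × ℝ → ℝ}
    (hsys : SolvesSystem c u w z p q x t) (P : ℝ × ℝ) (hc : c (u P) ≠ 0) :
    dX x P * dY t P - dY x P * dX t P =
      (1 + Real.cos (w P)) * p P * ((1 + Real.cos (z P)) * q P) / (8 * c (u P)) := by
  obtain ⟨-, -, -, -, -, -, hxX, hxY, htX, htY⟩ := hsys P
  rw [hxX, hxY, htX, htY]
  field_simp
  ring

theorem local_diffeomorphism_general
    (c : ℝ → ℝ) (c₀ : ℝ) (hc₀ : 0 < c₀)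
    (hclb : ∀ v, c₀ ≤ c v)
    (u w z p q x t : ℝ × ℝ → ℝ)
    (hsmooth : Smooth7 u w z p q x t)
    (hsys : SolvesSystem c u w z p q x t)
    (X₀ Y₀ : ℝ)
    (hw : Real.cos (w (X₀, Y₀)) > -1)
    (hz : Real.cos (z (X₀, Y₀)) > -1)
    (hp : p (X₀, Y₀) > 0) (hq : q (X₀, Y₀) > 0) :
    ∃ U : Set (ℝ × ℝ), IsOpen U ∧ (X₀, Y₀) ∈ U ∧
      Set.InjOn (fun P => (x P, t P)) U ∧
      IsOpen ((fun P => (x P, t P)) '' U) ∧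
      ∃ g : ℝ × ℝ → ℝ × ℝ,
        ContDiffOn ℝ (⊤ : ℕ∞) g ((fun P => (x P, t P)) '' U) ∧
        ∀ P ∈ U, g (x P, t P) = P := by
  obtain ⟨-, -, -, -, -, hx, ht⟩ := hsmooth
  have hc : 0 < c (u (X₀, Y₀)) := hc₀.trans_le (hclb _)
  have hdet : dX x (X₀, Y₀) * dY t (X₀, Y₀) - dY x (X₀, Y₀) * dX t (X₀, Y₀) ≠ 0 := by
    rw [hsys.dX_mul_dY_sub_dY_mul_dX _ hc.ne']
    have hw' : 0 < 1 + Real.cos (w (X₀, Y₀)) := by linarith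
    have hz' : 0 < 1 + Real.cos (z (X₀, Y₀)) := by linarith
    positivity
  obtain ⟨e, he⟩ := exists_equiv_eq_fderiv_prod_of_det_ne_zero x t _ hdet
  have hΛ' : HasFDerivAt (fun P => (x P, t P)) (e : (ℝ × ℝ) →L[ℝ] ℝ × ℝ) (X₀, Y₀) := by
    rw [he]
    exact (hx.differentiable (by simp) _).hasFDerivAt.prodMk
      (ht.differentiable (by simp) _).hasFDerivAt
  exact (hx.prodMk ht).exists_local_contDiff_inverse (by simp) hΛ'

/-- at a point where `cos w > -1`, `cos z > -1`, `p > 0`, `q > 0`,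
the map `Λ(X,Y) = (x(X,Y), t(X,Y))` is a local smooth diffeomorphism. -/
theorem local_diffeomorphism
    (c : ℝ → ℝ) (c₀ : ℝ) (hc₀ : 0 < c₀) (hc : ContDiff ℝ (⊤ : ℕ∞) c)
    (hclb : ∀ v, c₀ ≤ c v)
    (u w z p q x t : ℝ × ℝ → ℝ)
    (hsmooth : Smooth7 u w z p q x t)
    (hsys : SolvesSystem c u w z p q x t)
    (X₀ Y₀ : ℝ)
    (hw : Real.cos (w (X₀, Y₀)) > -1)
    (hz : Real.cos (z (X₀, Y₀)) > -1)
    (hp : p (X₀, Y₀) > 0) (hq : q (X₀, Y₀) > 0) :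
    ∃ U : Set (ℝ × ℝ), IsOpen U ∧ (X₀, Y₀) ∈ U ∧
      Set.InjOn (fun P => (x P, t P)) U ∧
      IsOpen ((fun P => (x P, t P)) '' U) ∧
      ∃ g : ℝ × ℝ → ℝ × ℝ,
        ContDiffOn ℝ (⊤ : ℕ∞) g ((fun P => (x P, t P)) '' U) ∧
        ∀ P ∈ U, g (x P, t P) = P :=
  local_diffeomorphism_general c c₀ hc₀ hclb u w z p q x t hsmooth hsys X₀ Y₀ hw hz hp hq
end

section
/- Let c : ℝ → ℝ be smooth with c(v) ≥ c₀ > 0, and let u, w, z, p, q, x, t : ℝ² → ℝ be smooth functions solving the semilinear system. Let (X₀,Y₀) be a point where w(X₀,Y₀) = π, and write u₀ = u(X₀,Y₀), z₀ = z(X₀,Y₀), p₀ = p(X₀,Y₀), q₀ = q(X₀,Y₀). Then at (X₀,Y₀): t_X = 0; t_Y = (1+cos z₀)·q₀/(4c(u₀)); t_XX = 0; t_XY = 0; and t_XXX = w_X(X₀,Y₀)²·p₀/(4c(u₀)). -/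
/-!
By the system, `t_X = (1 + cos w) · p / (4 c(u))`. At a point where `w = π` the factor
`1 + cos w` vanishes together with its gradient `-sin w · ∇w`, so `t_X`, `t_XX` and `t_XY`
vanish there, and Leibniz's rule leaves only `(1 + cos w)_XX · p / (4 c(u))` in `t_XXX`, where
`(1 + cos w)_XX = -cos w · w_X² - sin w · w_XX = w_X²`.
-/

open Real

section DirectionalDerivative

variable {E : Type*} [NormedAddCommGroup E] [NormedSpace ℝ E]

lemma fderiv_fun_mul_apply_s7 {a b : E → ℝ} {P : E} (ha : DifferentiableAt ℝ a P)
    (hb : DifferentiableAt ℝ b P) (v : E) :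
    fderiv ℝ (fun Q => a Q * b Q) P v = fderiv ℝ a P v * b P + a P * fderiv ℝ b P v := by
  rw [fderiv_fun_mul ha hb]
  simp only [add_apply, smul_apply, smul_eq_mul]
  ring

lemma differentiable_fderiv_apply {f : E → ℝ} (hf : ContDiff ℝ 2 f) (v : E) :
    Differentiable ℝ (fun Q => fderiv ℝ f Q v) :=
  ((hf.fderiv_right (m := 1) (by norm_num)).clm_apply contDiff_const).differentiable one_ne_zero

lemma fderiv_fun_mul_eq_zero_of_eq_zero {a b : E → ℝ} {P : E} (ha : DifferentiableAt ℝ a P)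
    (hb : DifferentiableAt ℝ b P) (ha₀ : a P = 0) (hda₀ : fderiv ℝ a P = 0) :
    fderiv ℝ (fun Q => a Q * b Q) P = 0 := by
  rw [fderiv_fun_mul ha hb, ha₀, hda₀]
  simp

lemma fderiv_fderiv_fun_mul_apply_of_eq_zero {a b : E → ℝ} (ha : ContDiff ℝ 2 a)
    (hb : ContDiff ℝ 2 b) {P : E} (ha₀ : a P = 0) (hda₀ : fderiv ℝ a P = 0) (v : E) :
    fderiv ℝ (fun Q => fderiv ℝ (fun Q => a Q * b Q) Q v) P v
      = fderiv ℝ (fun Q => fderiv ℝ a Q v) P v * b P := by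
  have ha₁ := ha.differentiable two_ne_zero
  have hb₁ := hb.differentiable two_ne_zero
  have hDa := differentiable_fderiv_apply ha v
  have hDb := differentiable_fderiv_apply hb v
  have hleibniz : (fun Q => fderiv ℝ (fun Q => a Q * b Q) Q v)
      = fun Q => fderiv ℝ a Q v * b Q + a Q * fderiv ℝ b Q v :=
    funext fun Q => fderiv_fun_mul_apply_s7 (ha₁ Q) (hb₁ Q) v
  rw [hleibniz, fderiv_fun_add ((hDa P).fun_mul (hb₁ P)) ((ha₁ P).fun_mul (hDb P)),
    add_apply, fderiv_fun_mul_apply_s7 (hDa P) (hb₁ P),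
    fderiv_fun_mul_apply_s7 (ha₁ P) (hDb P), ha₀, hda₀]
  simp

lemma fderiv_one_add_cos_comp {w : E → ℝ} {P : E} (hw : DifferentiableAt ℝ w P) :
    fderiv ℝ (fun Q => 1 + cos (w Q)) P = -sin (w P) • fderiv ℝ w P := by
  rw [fderiv_const_add, fderiv_cos hw]

lemma fderiv_fderiv_one_add_cos_comp_apply {w : E → ℝ} (hw : ContDiff ℝ 2 w) (P v : E) :
    fderiv ℝ (fun Q => fderiv ℝ (fun Q => 1 + cos (w Q)) Q v) P v
      = -cos (w P) * fderiv ℝ w P v ^ 2 - sin (w P) * fderiv ℝ (fun Q => fderiv ℝ w Q v) P v := by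
  have hw₁ := hw.differentiable two_ne_zero
  have hchain : (fun Q => fderiv ℝ (fun Q => 1 + cos (w Q)) Q v)
      = fun Q => -(sin (w Q) * fderiv ℝ w Q v) := funext fun Q => by
    simp [fderiv_one_add_cos_comp (hw₁ Q)]
  rw [hchain, fderiv_fun_neg, neg_apply,
    fderiv_fun_mul_apply_s7 ((hw₁ P).sin) (differentiable_fderiv_apply hw v P), fderiv_sin (hw₁ P)]
  simp only [smul_apply, smul_eq_mul]
  ring

end DirectionalDerivative

/-- partial derivatives of `t` at a point where `w = π`. -/
theorem t_derivatives_at_type1_point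
    (c : ℝ → ℝ) (c₀ : ℝ) (hc₀ : 0 < c₀) (hc : ContDiff ℝ (⊤ : ℕ∞) c)
    (hclb : ∀ v, c₀ ≤ c v)
    (u w z p q x t : ℝ × ℝ → ℝ)
    (hsmooth : Smooth7 u w z p q x t)
    (hsys : SolvesSystem c u w z p q x t)
    (X₀ Y₀ : ℝ) (hwπ : w (X₀, Y₀) = Real.pi)
    (u₀ z₀ p₀ q₀ : ℝ)
    (hu₀ : u₀ = u (X₀, Y₀)) (hz₀ : z₀ = z (X₀, Y₀))
    (hp₀ : p₀ = p (X₀, Y₀)) (hq₀ : q₀ = q (X₀, Y₀)) :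
    dX t (X₀, Y₀) = 0 ∧
    dY t (X₀, Y₀) = (1 + Real.cos z₀) * q₀ / (4 * c u₀) ∧
    dX (dX t) (X₀, Y₀) = 0 ∧
    dY (dX t) (X₀, Y₀) = 0 ∧
    dX (dX (dX t)) (X₀, Y₀) = dX w (X₀, Y₀) ^ 2 * p₀ / (4 * c u₀) := by
  obtain ⟨hu, hw, -, hp, -, -, -⟩ := hsmooth
  have htwo : (2 : WithTop ℕ∞) ≤ ((⊤ : ℕ∞) : WithTop ℕ∞) := WithTop.coe_le_coe.mpr le_top
  have hw₂ : ContDiff ℝ 2 w := hw.of_le htwo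
  have ha : ContDiff ℝ 2 fun Q => 1 + cos (w Q) := contDiff_const.add hw₂.cos
  have hb : ContDiff ℝ 2 fun Q => p Q / (4 * c (u Q)) :=
    (hp.div (contDiff_const.mul (hc.comp hu))
      fun Q => (mul_pos four_pos (hc₀.trans_le (hclb (u Q)))).ne').of_le htwo
  have htX : dX t = fun Q => (1 + cos (w Q)) * (p Q / (4 * c (u Q))) :=
    funext fun Q => by rw [(hsys Q).2.2.2.2.2.2.2.2.1, mul_div_assoc]
  have ha₀ : 1 + cos (w (X₀, Y₀)) = 0 := by simp [hwπ]
  have hda₀ : fderiv ℝ (fun Q => 1 + cos (w Q)) (X₀, Y₀) = 0 := by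
    rw [fderiv_one_add_cos_comp ((hw₂.differentiable two_ne_zero) _), hwπ, sin_pi, neg_zero,
      zero_smul]
  have hdtX : fderiv ℝ (dX t) (X₀, Y₀) = 0 := by
    rw [htX]
    exact fderiv_fun_mul_eq_zero_of_eq_zero (ha.differentiable two_ne_zero _)
      (hb.differentiable two_ne_zero _) ha₀ hda₀
  refine ⟨by simp [htX, ha₀], by rw [(hsys _).2.2.2.2.2.2.2.2.2, hu₀, hz₀, hq₀],
    by simp [dX, hdtX], by simp [dY, hdtX], ?_⟩
  change fderiv ℝ (fun Q => fderiv ℝ (dX t) Q (1, 0)) (X₀, Y₀) (1, 0) = _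
  rw [htX, fderiv_fderiv_fun_mul_apply_of_eq_zero ha hb ha₀ hda₀,
    fderiv_fderiv_one_add_cos_comp_apply hw₂, hwπ, cos_pi, sin_pi, hp₀, hu₀]
  simp only [dX]
  ring
end

section
/- Let c : ℝ → ℝ be smooth with c(v) ≥ c₀ > 0, and let u, w, z, p, q, x, t : ℝ² → ℝ be smooth functions solving the semilinear system. Let (X₀,Y₀) be a point where w(X₀,Y₀) = π, and write u₀ = u(X₀,Y₀), z₀ = z(X₀,Y₀), p₀ = p(X₀,Y₀), q₀ = q(X₀,Y₀), x₀ = x(X₀,Y₀), t₀ = t(X₀,Y₀). Then there exist a constant C > 0 and a neighborhood N of (X₀,Y₀) such that for all (X,Y) ∈ N, writing x = x(X,Y) and t = t(X,Y): |(x − x₀) − c(u₀)(t − t₀) + ((1+cos z₀)·q₀/2)·(Y − Y₀)| ≤ C·(|X−X₀|⁴ + |Y−Y₀|² + |X−X₀|²·|Y−Y₀|), and |(x − x₀) + c(u₀)(t − t₀) − (w_X(X₀,Y₀)²·p₀/12)·(X − X₀)³| ≤ C·(|X−X₀|⁴ + |Y−Y₀|² + |X−X₀|²·|Y−Y₀|).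 -/
/-!
Fix a constant `κ` and write `ρ = κ / c(u)`. Along the line `Y = Y₀` the system gives
`∂_X (x - κ t) = (1 + cos w) · (p / 4) · (1 - ρ)`. Since `w(X₀, Y₀) = π`, the factor `1 + cos w`
vanishes to second order at `X₀` with second derivative `w_X²`, so by the Leibniz rule `x - κ t`
vanishes to third order in `X`, with third derivative `w_X² p (1 - ρ) / 4`.
Transversally, `∂_Y (x - κ t) = -((1 + cos z) q / 4) (1 + ρ)` has zero `X`-derivative at
`(X₀, Y₀)`: there `u_X = sin w · p / (4 c)` vanishes, and the contributions of `z_X` and `q_X` to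
`((1 + cos z) q)_X` cancel. A first-order Taylor expansion in `Y`, whose remainder is bounded
uniformly in `X` through a Lipschitz bound on `∂_Y`, glues the two one-variable expansions with
error `|ΔX|⁴ + |ΔY|² + |ΔX|² |ΔY|`. The theorem is the case `κ = ± c(u₀)`.
-/

open Real Filter Topology Asymptotics Nat

def VanishesToOrder (f : ℝ → ℝ) (a : ℝ) (n : ℕ) : Prop :=
  ∀ k < n, iteratedDeriv k f a = 0

namespace VanishesToOrder

variable {f g : ℝ → ℝ} {a : ℝ} {m n : ℕ}

@[simp]
lemma one_iff : VanishesToOrder f a 1 ↔ f a = 0 := by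
  simp [VanishesToOrder]

lemma mono (h : VanishesToOrder f a n) (hmn : m ≤ n) : VanishesToOrder f a m :=
  fun k hk => h k (hk.trans_le hmn)

lemma of_deriv (h₀ : f a = 0) (h : VanishesToOrder (deriv f) a n) :
    VanishesToOrder f a (n + 1) := by
  rintro (_ | k) hk
  · simpa using h₀
  · rw [iteratedDeriv_succ']
    exact h k (by omega)

lemma mul_right (hf : VanishesToOrder f a n)
    (hf' : ContDiffAt ℝ n f a) (hg' : ContDiffAt ℝ n g a) : VanishesToOrder (f * g) a n := by
  intro k hk
  have hkn : (k : WithTop ℕ∞) ≤ n := by exact_mod_cast hk.le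
  rw [_root_.iteratedDeriv_mul (hf'.of_le hkn) (hg'.of_le hkn)]
  refine Finset.sum_eq_zero fun i hi => ?_
  have hik := Finset.mem_range_succ_iff.1 hi
  simp [hf i (by omega)]

lemma iteratedDeriv_mul (hf : VanishesToOrder f a n)
    (hf' : ContDiffAt ℝ n f a) (hg' : ContDiffAt ℝ n g a) :
    iteratedDeriv n (f * g) a = iteratedDeriv n f a * g a := by
  rw [_root_.iteratedDeriv_mul hf' hg', Finset.sum_range_succ,
    Finset.sum_eq_zero fun i hi => by simp [hf i (Finset.mem_range.1 hi)]]
  simp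

lemma isBigO_sub_pow (h : VanishesToOrder f a n) (hf : ContDiff ℝ (n + 1) f) :
    (fun x => f x - iteratedDeriv n f a / n ! * (x - a) ^ n) =O[𝓝 a]
      fun x => (x - a) ^ (n + 1) := by
  have htaylor : ∀ x, taylorWithinEval f (n + 1) Set.univ a x =
      iteratedDeriv n f a / n ! * (x - a) ^ n
        + iteratedDeriv (n + 1) f a / (n + 1) ! * (x - a) ^ (n + 1) := by
    intro x
    rw [taylor_within_apply, Finset.sum_range_succ, Finset.sum_range_succ,
      Finset.sum_eq_zero fun i hi => by simp [h i (Finset.mem_range.1 hi)]]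
    simp only [iteratedDerivWithin_univ, smul_eq_mul]
    ring
  have hrem := (taylor_isLittleO_univ (x₀ := a) (n := n + 1) (by exact_mod_cast hf)).isBigO
  have hlead : (fun x => iteratedDeriv (n + 1) f a / (n + 1) ! * (x - a) ^ (n + 1)) =O[𝓝 a]
      fun x => (x - a) ^ (n + 1) := isBigO_const_mul_self _ _ _
  refine (hrem.add hlead).congr_left fun x => ?_
  rw [htaylor]
  ring

lemma isBigO_pow (h : VanishesToOrder f a (n + 1)) (hf : ContDiff ℝ (n + 1) f) :
    f =O[𝓝 a] fun x => (x - a) ^ (n + 1) := by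
  simpa [h n n.lt_succ_self] using isBigO_sub_pow (h.mono n.le_succ) hf

end VanishesToOrder

lemma hasDerivAt_dX {f : ℝ × ℝ → ℝ} {X Y : ℝ} (hf : DifferentiableAt ℝ f (X, Y)) :
    HasDerivAt (fun s => f (s, Y)) (dX f (X, Y)) X := by
  simpa [dX, Function.comp_def] using
    hf.hasFDerivAt.comp_hasDerivAt X ((hasDerivAt_id X).prodMk (hasDerivAt_const X Y))

lemma hasDerivAt_dY {f : ℝ × ℝ → ℝ} {X Y : ℝ} (hf : DifferentiableAt ℝ f (X, Y)) :
    HasDerivAt (fun s => f (X, s)) (dY f (X, Y)) Y := by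
  simpa [dY, Function.comp_def] using
    hf.hasFDerivAt.comp_hasDerivAt Y ((hasDerivAt_const Y X).prodMk (hasDerivAt_id Y))

lemma ContDiff.dY {f : ℝ × ℝ → ℝ} {m n : WithTop ℕ∞} (hf : ContDiff ℝ n f) (hmn : m + 1 ≤ n) :
    ContDiff ℝ m (dY f) :=
  (ContinuousLinearMap.apply ℝ ℝ ((0, 1) : ℝ × ℝ)).contDiff.comp (hf.fderiv_right hmn)

lemma isBigO_sub_sub_dY_mul {Φ : ℝ × ℝ → ℝ} (hΦ : ContDiff ℝ 2 Φ) (X₀ Y₀ : ℝ) :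
    (fun P : ℝ × ℝ => Φ P - Φ (P.1, Y₀) - dY Φ (P.1, Y₀) * (P.2 - Y₀)) =O[𝓝 (X₀, Y₀)]
      fun P => (P.2 - Y₀) ^ 2 := by
  obtain ⟨K, s, hs, hK⟩ :=
    ((hΦ.dY (m := 1) le_rfl).contDiffAt (x := (X₀, Y₀))).exists_lipschitzOnWith
  obtain ⟨ε, hε, hball⟩ := Metric.mem_nhds_iff.1 hs
  refine IsBigO.of_bound K ?_
  filter_upwards [Metric.ball_mem_nhds _ hε] with ⟨X, Y⟩ hP
  have hvert : ∀ y ∈ Set.uIcc Y₀ Y, (X, y) ∈ s := fun y hy => hball <| by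
    have := Set.abs_sub_left_of_mem_uIcc hy
    simp only [Metric.mem_ball, Prod.dist_eq, Real.dist_eq, max_lt_iff] at hP ⊢
    exact ⟨hP.1, this.trans_lt hP.2⟩
  have hderiv : ∀ y ∈ Set.uIcc Y₀ Y, HasDerivWithinAt (fun y => Φ (X, y) - dY Φ (X, Y₀) * y)
      (dY Φ (X, y) - dY Φ (X, Y₀)) (Set.uIcc Y₀ Y) y := fun y _ =>
    ((hasDerivAt_dY (hΦ.differentiable two_ne_zero _)).sub
      ((hasDerivAt_id y).const_mul _ |>.congr_deriv (mul_one _))).hasDerivWithinAt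
  have hbound : ∀ y ∈ Set.uIcc Y₀ Y, ‖dY Φ (X, y) - dY Φ (X, Y₀)‖ ≤ K * |Y - Y₀| := by
    intro y hy
    have := hK.dist_le_mul _ (hvert y hy) _ (hvert Y₀ Set.left_mem_uIcc)
    rw [show dist (X, y) (X, Y₀) = dist y Y₀ by simp [Prod.dist_eq]] at this
    rw [← dist_eq_norm, ← Real.dist_eq]
    exact this.trans (by gcongr; exact Set.abs_sub_left_of_mem_uIcc hy)
  have := convex_uIcc Y₀ Y |>.norm_image_sub_le_of_norm_hasDerivWithin_le hderiv hbound
    Set.left_mem_uIcc Set.right_mem_uIcc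
  convert this using 1
  · congr 1
    ring
  · rw [Real.norm_eq_abs, Real.norm_eq_abs, abs_pow, mul_assoc, ← sq]

def remainderGauge (X₀ Y₀ : ℝ) (P : ℝ × ℝ) : ℝ :=
  |P.1 - X₀| ^ 4 + |P.2 - Y₀| ^ 2 + |P.1 - X₀| ^ 2 * |P.2 - Y₀|

lemma isBigO_of_isBigO_slices {Φ : ℝ × ℝ → ℝ} (hΦ : ContDiff ℝ 2 Φ) {X₀ Y₀ : ℝ}
    (h₁ : (fun X => Φ (X, Y₀)) =O[𝓝 X₀] fun X => (X - X₀) ^ 4)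
    (h₂ : (fun X => dY Φ (X, Y₀)) =O[𝓝 X₀] fun X => (X - X₀) ^ 2) :
    Φ =O[𝓝 (X₀, Y₀)] remainderGauge X₀ Y₀ := by
  have hfst : Tendsto Prod.fst (𝓝 (X₀, Y₀)) (𝓝 X₀) := continuous_fst.tendsto _
  have hle : ∀ {e : ℝ × ℝ → ℝ}, (∀ P, |e P| ≤ remainderGauge X₀ Y₀ P) →
      e =O[𝓝 (X₀, Y₀)] remainderGauge X₀ Y₀ :=
    fun he => isBigO_of_le _ fun P => (he P).trans (le_abs_self _)
  have hterms : ∀ P : ℝ × ℝ, 0 ≤ |P.1 - X₀| ^ 4 ∧ 0 ≤ |P.2 - Y₀| ^ 2 ∧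
      0 ≤ |P.1 - X₀| ^ 2 * |P.2 - Y₀| := fun P => ⟨by positivity, by positivity, by positivity⟩
  have e₁ := (h₁.comp_tendsto hfst).trans <| hle fun P => by
    obtain ⟨_, _, _⟩ := hterms P
    simp only [remainderGauge, Function.comp_apply, abs_pow]
    linarith
  have e₂ := ((h₂.comp_tendsto hfst).mul (isBigO_refl (fun P : ℝ × ℝ => P.2 - Y₀) _)).trans <|
    hle fun P => by
      obtain ⟨_, _, _⟩ := hterms P
      simp only [remainderGauge, Function.comp_apply, abs_mul, abs_pow]
      linarith
  have e₃ := (isBigO_sub_sub_dY_mul hΦ X₀ Y₀).trans <| hle fun P => by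
    obtain ⟨_, _, _⟩ := hterms P
    simp only [remainderGauge, abs_pow]
    linarith
  refine ((e₃.add e₁).add e₂).congr_left fun P => ?_
  simp only [Function.comp_apply]
  ring

lemma vanishesToOrder_one_add_cos {θ : ℝ → ℝ} {a : ℝ} (hθ : ContDiff ℝ 2 θ) (ha : θ a = π) :
    VanishesToOrder (fun x => 1 + cos (θ x)) a 2 ∧
      iteratedDeriv 2 (fun x => 1 + cos (θ x)) a = deriv θ a ^ 2 := by
  have hθ' : Differentiable ℝ θ := hθ.differentiable two_ne_zero
  have hθ'' : Differentiable ℝ (deriv θ) :=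
    ((contDiff_succ_iff_deriv (n := 1)).1 hθ).2.2.differentiable one_ne_zero
  have hderiv : deriv (fun x => 1 + cos (θ x)) = fun x => -sin (θ x) * deriv θ x :=
    funext fun x => ((hθ' x).hasDerivAt.cos.const_add 1).deriv
  refine ⟨.of_deriv (by simp [ha]) (by simp [hderiv, ha]), ?_⟩
  rw [iteratedDeriv_succ, iteratedDeriv_one, hderiv,
    ((hθ' a).hasDerivAt.sin.fun_neg.fun_mul (hθ'' a).hasDerivAt).deriv, ha, cos_pi, sin_pi]
  ring

namespace SolvesSystem

variable {c : ℝ → ℝ} {u w z p q x t : ℝ × ℝ → ℝ} {X₀ Y₀ : ℝ}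

lemma hasDerivAt_x_sub_mul_t (hsys : SolvesSystem c u w z p q x t)
    (hx : Differentiable ℝ x) (ht : Differentiable ℝ t) (κ x₀ t₀ X Y : ℝ) :
    HasDerivAt (fun s => (x (s, Y) - x₀) - κ * (t (s, Y) - t₀))
      ((1 + cos (w (X, Y))) * (p (X, Y) / 4 * (1 - κ / c (u (X, Y))))) X := by
  obtain ⟨-, -, -, -, -, -, hxX, -, htX, -⟩ := hsys (X, Y)
  refine (((hasDerivAt_dX (hx _)).sub_const x₀).fun_sub
    (((hasDerivAt_dX (ht _)).sub_const t₀).const_mul κ)).congr_deriv ?_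
  rw [hxX, htX]
  ring

lemma dY_x_sub_mul_dY_t (hsys : SolvesSystem c u w z p q x t) (κ : ℝ) (P : ℝ × ℝ) :
    dY x P - κ * dY t P = -((1 + cos (z P)) * q P / 4 * (1 + κ / c (u P))) := by
  obtain ⟨-, -, -, -, -, -, -, hxY, -, htY⟩ := hsys P
  rw [hxY, htY]
  ring

lemma hasDerivAt_div_c_comp_u (hsys : SolvesSystem c u w z p q x t)
    (hc : Differentiable ℝ c) (hu : Differentiable ℝ u) (hcu : c (u (X₀, Y₀)) ≠ 0)
    (hwπ : w (X₀, Y₀) = π) (κ : ℝ) :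
    HasDerivAt (fun X => κ / c (u (X, Y₀))) 0 X₀ := by
  have huX : dX u (X₀, Y₀) = 0 := by rw [(hsys _).1, hwπ, sin_pi, zero_mul, zero_div]
  have hcu' : HasDerivAt (fun X => c (u (X, Y₀))) 0 X₀ := by
    simpa [huX, Function.comp_def] using
      (hc _).hasDerivAt.comp X₀ (hasDerivAt_dX (Y := Y₀) (hu _))
  simpa [div_eq_mul_inv] using (hcu'.inv hcu).const_mul κ

lemma hasDerivAt_one_add_cos_mul (hsys : SolvesSystem c u w z p q x t)
    (hz : Differentiable ℝ z) (hq : Differentiable ℝ q) (hwπ : w (X₀, Y₀) = π) :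
    HasDerivAt (fun X => (1 + cos (z (X, Y₀))) * q (X, Y₀)) 0 X₀ := by
  obtain ⟨-, -, -, hzX, -, hqX, -⟩ := hsys (X₀, Y₀)
  refine (((hasDerivAt_dX (hz _)).cos.const_add 1).fun_mul (hasDerivAt_dX (hq _))).congr_deriv ?_
  rw [hzX, hqX, hwπ, cos_pi, sin_pi]
  ring

lemma hasDerivAt_dY_x_sub_mul_dY_t (hsys : SolvesSystem c u w z p q x t)
    (hc : Differentiable ℝ c) (hu : Differentiable ℝ u) (hz : Differentiable ℝ z)
    (hq : Differentiable ℝ q) (hcu : c (u (X₀, Y₀)) ≠ 0) (hwπ : w (X₀, Y₀) = π) (κ : ℝ) :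
    HasDerivAt (fun X => dY x (X, Y₀) - κ * dY t (X, Y₀)) 0 X₀ := by
  simp only [hsys.dY_x_sub_mul_dY_t]
  simpa using (((hsys.hasDerivAt_one_add_cos_mul hz hq hwπ).div_const 4).fun_mul
    ((hsys.hasDerivAt_div_c_comp_u hc hu hcu hwπ κ).const_add 1)).fun_neg

lemma vanishesToOrder_x_sub_mul_t (hsys : SolvesSystem c u w z p q x t)
    (hc : ContDiff ℝ 2 c) (hu : ContDiff ℝ 2 u) (hw : ContDiff ℝ 2 w) (hp : ContDiff ℝ 2 p)
    (hx : Differentiable ℝ x) (ht : Differentiable ℝ t)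
    (hcu : c (u (X₀, Y₀)) ≠ 0) (hwπ : w (X₀, Y₀) = π) (κ : ℝ) :
    VanishesToOrder (fun X => (x (X, Y₀) - x (X₀, Y₀)) - κ * (t (X, Y₀) - t (X₀, Y₀))) X₀ 3 ∧
      iteratedDeriv 3 (fun X => (x (X, Y₀) - x (X₀, Y₀)) - κ * (t (X, Y₀) - t (X₀, Y₀))) X₀ =
        dX w (X₀, Y₀) ^ 2 * (p (X₀, Y₀) / 4 * (1 - κ / c (u (X₀, Y₀)))) := by
  have hι : ContDiff ℝ 2 (fun X : ℝ => (X, Y₀)) := contDiff_id.prodMk contDiff_const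
  set W : ℝ → ℝ := fun X => 1 + cos (w (X, Y₀))
  set g : ℝ → ℝ := fun X => p (X, Y₀) / 4 * (1 - κ / c (u (X, Y₀)))
  have hderiv : deriv (fun X => (x (X, Y₀) - x (X₀, Y₀)) - κ * (t (X, Y₀) - t (X₀, Y₀))) = W * g :=
    funext fun X => (hsys.hasDerivAt_x_sub_mul_t hx ht κ _ _ X Y₀).deriv
  obtain ⟨hWvan, hW₂⟩ : VanishesToOrder W X₀ 2 ∧ iteratedDeriv 2 W X₀ = dX w (X₀, Y₀) ^ 2 := by
    rw [← (hasDerivAt_dX (hw.differentiable two_ne_zero _)).deriv]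
    exact vanishesToOrder_one_add_cos (θ := fun X => w (X, Y₀)) (hw.comp hι) hwπ
  have hW : ContDiffAt ℝ 2 W X₀ := by fun_prop
  have hg : ContDiffAt ℝ 2 g X₀ := by fun_prop (disch := assumption)
  refine ⟨.of_deriv (by simp) (hderiv ▸ hWvan.mul_right hW hg), ?_⟩
  rw [iteratedDeriv_succ', hderiv, hWvan.iteratedDeriv_mul hW hg, hW₂]

lemma isBigO_dY_x_sub_mul_dY_t_add (hsys : SolvesSystem c u w z p q x t)
    (hc : Differentiable ℝ c) (hu : Differentiable ℝ u) (hz : Differentiable ℝ z)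
    (hq : Differentiable ℝ q) (hx : ContDiff ℝ 3 x) (ht : ContDiff ℝ 3 t)
    (hcu : c (u (X₀, Y₀)) ≠ 0) (hwπ : w (X₀, Y₀) = π) (κ : ℝ) :
    (fun X => dY x (X, Y₀) - κ * dY t (X, Y₀)
        + (1 + cos (z (X₀, Y₀))) * q (X₀, Y₀) / 4 * (1 + κ / c (u (X₀, Y₀))))
      =O[𝓝 X₀] fun X => (X - X₀) ^ 2 := by
  have hdYx : ContDiff ℝ 2 (dY x) := hx.dY (by norm_num)
  have hdYt : ContDiff ℝ 2 (dY t) := ht.dY (by norm_num)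
  refine VanishesToOrder.isBigO_pow (.of_deriv ?_ (VanishesToOrder.one_iff.2 ?_)) (by fun_prop)
  · simp only [hsys.dY_x_sub_mul_dY_t]
    ring
  · exact ((hsys.hasDerivAt_dY_x_sub_mul_dY_t hc hu hz hq hcu hwπ κ).add_const _).deriv

theorem isBigO_x_sub_mul_t_sub_taylor (hsys : SolvesSystem c u w z p q x t)
    (hc : ContDiff ℝ (⊤ : ℕ∞) c) (hsmooth : Smooth7 u w z p q x t)
    (hcu : c (u (X₀, Y₀)) ≠ 0) (hwπ : w (X₀, Y₀) = π) (κ : ℝ) :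
    (fun P : ℝ × ℝ => (x P - x (X₀, Y₀)) - κ * (t P - t (X₀, Y₀))
        + (1 + cos (z (X₀, Y₀))) * q (X₀, Y₀) / 4 * (1 + κ / c (u (X₀, Y₀))) * (P.2 - Y₀)
        - dX w (X₀, Y₀) ^ 2 * p (X₀, Y₀) / 24 * (1 - κ / c (u (X₀, Y₀))) * (P.1 - X₀) ^ 3)
      =O[𝓝 (X₀, Y₀)] remainderGauge X₀ Y₀ := by
  obtain ⟨hu, hw, hz, hp, hq, hx, ht⟩ := hsmooth
  have hx₂ : ContDiff ℝ 2 x := contDiff_infty.1 hx 2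
  have ht₂ : ContDiff ℝ 2 t := contDiff_infty.1 ht 2
  have hx₄ : ContDiff ℝ 4 x := contDiff_infty.1 hx 4
  have ht₄ : ContDiff ℝ 4 t := contDiff_infty.1 ht 4
  have hxd : Differentiable ℝ x := hx₂.differentiable two_ne_zero
  have htd : Differentiable ℝ t := ht₂.differentiable two_ne_zero
  set k := (1 + cos (z (X₀, Y₀))) * q (X₀, Y₀) / 4 * (1 + κ / c (u (X₀, Y₀)))
  set a := dX w (X₀, Y₀) ^ 2 * p (X₀, Y₀) / 24 * (1 - κ / c (u (X₀, Y₀))) with ha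
  refine isBigO_of_isBigO_slices (by fun_prop) ?_ ?_
  · obtain ⟨hvan, h₃⟩ := hsys.vanishesToOrder_x_sub_mul_t (contDiff_infty.1 hc 2)
      (contDiff_infty.1 hu 2) (contDiff_infty.1 hw 2) (contDiff_infty.1 hp 2) hxd htd hcu hwπ κ
    refine (hvan.isBigO_sub_pow (by fun_prop)).congr_left fun X => ?_
    rw [h₃, ha, show ((3 ! : ℕ) : ℝ) = 6 by norm_num [Nat.factorial]]
    ring
  · have hdY : ∀ X, dY x (X, Y₀) - κ * dY t (X, Y₀) + k = dY (fun P : ℝ × ℝ =>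
        (x P - x (X₀, Y₀)) - κ * (t P - t (X₀, Y₀)) + k * (P.2 - Y₀) - a * (P.1 - X₀) ^ 3)
        (X, Y₀) := fun X =>
      ((hasDerivAt_dY (by fun_prop)).unique <|
        (((((hasDerivAt_dY (hxd (X, Y₀))).sub_const _).fun_sub
          (((hasDerivAt_dY (htd (X, Y₀))).sub_const _).const_mul κ)).fun_add
          (((hasDerivAt_id Y₀).sub_const Y₀).const_mul k)).fun_sub
          (hasDerivAt_const Y₀ (a * (X - X₀) ^ 3))).congr_deriv (by ring)).symm
    exact (hsys.isBigO_dY_x_sub_mul_dY_t_add (hc.differentiable (by simp))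
      (hu.differentiable (by simp)) (hz.differentiable (by simp)) (hq.differentiable (by simp))
      (contDiff_infty.1 hx 3) (contDiff_infty.1 ht 3) hcu hwπ κ).congr_left hdY

end SolvesSystem

/-- leading-order expansions of `x ∓ c(u₀) t` near a point where `w = π`. -/
theorem taylor_expansion_x_pm_ct
    (c : ℝ → ℝ) (c₀ : ℝ) (hc₀ : 0 < c₀) (hc : ContDiff ℝ (⊤ : ℕ∞) c)
    (hclb : ∀ v, c₀ ≤ c v)
    (u w z p q x t : ℝ × ℝ → ℝ)
    (hsmooth : Smooth7 u w z p q x t)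
    (hsys : SolvesSystem c u w z p q x t)
    (X₀ Y₀ : ℝ) (hwπ : w (X₀, Y₀) = Real.pi)
    (u₀ z₀ p₀ q₀ x₀ t₀ : ℝ)
    (hu₀ : u₀ = u (X₀, Y₀)) (hz₀ : z₀ = z (X₀, Y₀))
    (hp₀ : p₀ = p (X₀, Y₀)) (hq₀ : q₀ = q (X₀, Y₀))
    (hx₀ : x₀ = x (X₀, Y₀)) (ht₀ : t₀ = t (X₀, Y₀)) :
    ∃ C : ℝ, C > 0 ∧ ∃ N : Set (ℝ × ℝ), IsOpen N ∧ (X₀, Y₀) ∈ N ∧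
      ∀ P ∈ N,
        |(x P - x₀) - c u₀ * (t P - t₀)
            + (1 + Real.cos z₀) * q₀ / 2 * (P.2 - Y₀)|
          ≤ C * (|P.1 - X₀| ^ 4 + |P.2 - Y₀| ^ 2 + |P.1 - X₀| ^ 2 * |P.2 - Y₀|) ∧
        |(x P - x₀) + c u₀ * (t P - t₀)
            - dX w (X₀, Y₀) ^ 2 * p₀ / 12 * (P.1 - X₀) ^ 3|
          ≤ C * (|P.1 - X₀| ^ 4 + |P.2 - Y₀| ^ 2 + |P.1 - X₀| ^ 2 * |P.2 - Y₀|) := by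
  subst hu₀ hz₀ hp₀ hq₀ hx₀ ht₀
  have hcu : c (u (X₀, Y₀)) ≠ 0 := (hc₀.trans_le (hclb _)).ne'
  have hexp := hsys.isBigO_x_sub_mul_t_sub_taylor hc hsmooth hcu hwπ
  obtain ⟨C, hC, hbound⟩ :=
    ((hexp (c (u (X₀, Y₀)))).prod_left (hexp (-c (u (X₀, Y₀))))).exists_pos
  obtain ⟨N, hN, hNopen, hmem⟩ := eventually_nhds_iff.1 hbound.bound
  refine ⟨C, hC, N, hNopen, hmem, fun P hP => ?_⟩
  have hP := hN P hP
  have hgauge : 0 ≤ remainderGauge X₀ Y₀ P := by unfold remainderGauge; positivity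
  rw [Prod.norm_mk, Real.norm_of_nonneg hgauge, Real.norm_eq_abs, Real.norm_eq_abs,
    neg_div, div_self hcu] at hP
  refine ⟨le_trans (le_of_eq ?_) ((le_max_left _ _).trans hP),
    le_trans (le_of_eq ?_) ((le_max_right _ _).trans hP)⟩ <;>
  · congr 1
    ring
end

section
/- Let c : ℝ → ℝ be smooth with c(v) ≥ c₀ > 0, and let u, w, z, p, q, x, t : ℝ² → ℝ be smooth functions solving the semilinear system. Let (X₀,Y₀) be a point where w(X₀,Y₀) = π, cos z(X₀,Y₀) > −1 and q(X₀,Y₀) > 0; write u₀ = u(X₀,Y₀), z₀ = z(X₀,Y₀), t₀ = t(X₀,Y₀). Suppose Φ is a C² function on a neighborhood of Y₀ with Φ(Y₀) = X₀ and w(Φ(Y),Y) = π for all Y near Y₀, and suppose φ is a C² function on a neighborhood of t₀ such that x(Φ(Y),Y) = φ(t(Φ(Y),Y)) for all Y near Y₀. Then φ'(t₀) = −c(u₀) and φ''(t₀) = −c'(u₀)·sin z₀/(1 + cos z₀). -/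
/-! Along the level set `w = π` the factors `1 + cos w` and `sin w` vanish, so `u`, `x` and `t`
are constant in `X` there and the curve `Y ↦ (Φ Y, Y)` differentiates them only through their
`Y`-equations. Since `x_Y = -c(u) t_Y`, its image `x = φ(t)` has `φ'(t(Φ Y, Y)) = -c(u(Φ Y, Y))`
for all `Y` near `Y₀` (division by `t_Y > 0` is allowed because `cos z > -1` and `q > 0` persist
near `Y₀`). Differentiating this identity once more at `Y₀` gives
`φ''(t₀) t_Y = -c'(u₀) u_Y`, and `u_Y / t_Y = sin z₀ / (1 + cos z₀)`. -/

open Real Filter Topology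

theorem hasDerivAt_comp_graph {f : ℝ × ℝ → ℝ} {Φ : ℝ → ℝ} {Y d : ℝ}
    (hf : DifferentiableAt ℝ f (Φ Y, Y)) (hΦ : HasDerivAt Φ d Y) :
    HasDerivAt (fun s => f (Φ s, s)) (d * dX f (Φ Y, Y) + dY f (Φ Y, Y)) Y := by
  have h := HasFDerivAt.comp_hasDerivAt (f := fun s => ((Φ s, s) : ℝ × ℝ)) Y hf.hasFDerivAt
    (hΦ.prodMk (hasDerivAt_id Y))
  have hv : fderiv ℝ f (Φ Y, Y) (d, 1) = d * dX f (Φ Y, Y) + dY f (Φ Y, Y) := by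
    have hd1 : ((d, 1) : ℝ × ℝ) = d • ((1 : ℝ), (0 : ℝ)) + ((0 : ℝ), (1 : ℝ)) := by simp
    rw [hd1, map_add, map_smul, smul_eq_mul]
    rfl
  exact hv ▸ h

theorem hasDerivAt_comp_graph_of_dX_eq_zero {f : ℝ × ℝ → ℝ} {Φ : ℝ → ℝ} {Y d : ℝ}
    (hf : DifferentiableAt ℝ f (Φ Y, Y)) (hΦ : HasDerivAt Φ d Y) (h0 : dX f (Φ Y, Y) = 0) :
    HasDerivAt (fun s => f (Φ s, s)) (dY f (Φ Y, Y)) Y := by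
  simpa [h0] using hasDerivAt_comp_graph hf hΦ

theorem deriv_eq_div_of_comp_eventuallyEq {φ T ξ : ℝ → ℝ} {Y τ ξ' : ℝ}
    (hφ : DifferentiableAt ℝ φ (T Y)) (hT : HasDerivAt T τ Y) (hξ : HasDerivAt ξ ξ' Y)
    (hcomp : (fun s => φ (T s)) =ᶠ[𝓝 Y] ξ) (hτ : τ ≠ 0) :
    deriv φ (T Y) = ξ' / τ :=
  eq_div_of_mul_eq hτ ((hφ.hasDerivAt.comp Y hT).unique (hξ.congr_of_eventuallyEq hcomp))

namespace SolvesSystem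

variable {c : ℝ → ℝ} {u w z p q x t : ℝ × ℝ → ℝ} {P : ℝ × ℝ}

theorem dX_u_eq_zero (hsys : SolvesSystem c u w z p q x t) (hw : w P = π) : dX u P = 0 := by
  simp [(hsys P).1, hw]

theorem dX_x_eq_zero (hsys : SolvesSystem c u w z p q x t) (hw : w P = π) : dX x P = 0 := by
  simp [(hsys P).2.2.2.2.2.2.1, hw]

theorem dX_t_eq_zero (hsys : SolvesSystem c u w z p q x t) (hw : w P = π) : dX t P = 0 := by
  simp [(hsys P).2.2.2.2.2.2.2.2.1, hw]

theorem dY_x_eq_neg_mul_dY_t (hsys : SolvesSystem c u w z p q x t) (hc : c (u P) ≠ 0) :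
    dY x P = -c (u P) * dY t P := by
  rw [(hsys P).2.2.2.2.2.2.2.1, (hsys P).2.2.2.2.2.2.2.2.2]
  field_simp

theorem eventually_dY_t_pos (hsys : SolvesSystem c u w z p q x t) (hc : ∀ v, 0 < c v)
    (hzc : ContinuousAt z P) (hqc : ContinuousAt q P) (hz : -1 < cos (z P)) (hq : 0 < q P) :
    ∀ᶠ P' in 𝓝 P, 0 < dY t P' := by
  filter_upwards [continuousAt_const.eventually_lt (continuous_cos.continuousAt.comp hzc) hz,
    continuousAt_const.eventually_lt hqc hq] with P' hzP hqP
  rw [(hsys P').2.2.2.2.2.2.2.2.2]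
  have : 0 < 1 + cos (z P') := by linarith [show -1 < cos (z P') from hzP]
  have := hc (u P')
  positivity

theorem dY_u_div_dY_t (hsys : SolvesSystem c u w z p q x t) (hc : c (u P) ≠ 0)
    (hq : q P ≠ 0) : dY u P / dY t P = sin (z P) / (1 + cos (z P)) := by
  rw [(hsys P).2.1, (hsys P).2.2.2.2.2.2.2.2.2,
    div_div_div_cancel_right₀ (mul_ne_zero four_ne_zero hc), mul_div_mul_right _ _ hq]

variable {Φ g : ℝ → ℝ} {Y : ℝ}

theorem deriv_eq_neg_c_of_comp_t_eq_x (hsys : SolvesSystem c u w z p q x t)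
    (hc : c (u (Φ Y, Y)) ≠ 0) (hw : w (Φ Y, Y) = π) (hΦ : DifferentiableAt ℝ Φ Y)
    (hx : DifferentiableAt ℝ x (Φ Y, Y)) (ht : DifferentiableAt ℝ t (Φ Y, Y))
    (hg : DifferentiableAt ℝ g (t (Φ Y, Y))) (hτ : dY t (Φ Y, Y) ≠ 0)
    (hcurve : (fun s => g (t (Φ s, s))) =ᶠ[𝓝 Y] fun s => x (Φ s, s)) :
    deriv g (t (Φ Y, Y)) = -c (u (Φ Y, Y)) := by
  rw [deriv_eq_div_of_comp_eventuallyEq (T := fun s => t (Φ s, s)) hg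
      (hasDerivAt_comp_graph_of_dX_eq_zero ht hΦ.hasDerivAt (hsys.dX_t_eq_zero hw))
      (hasDerivAt_comp_graph_of_dX_eq_zero hx hΦ.hasDerivAt (hsys.dX_x_eq_zero hw)) hcurve hτ,
    hsys.dY_x_eq_neg_mul_dY_t hc, mul_div_cancel_right₀ _ hτ]

theorem deriv_eq_of_comp_t_eq_neg_c (hsys : SolvesSystem c u w z p q x t)
    (hcd : DifferentiableAt ℝ c (u (Φ Y, Y))) (hc : c (u (Φ Y, Y)) ≠ 0) (hq : q (Φ Y, Y) ≠ 0)
    (hw : w (Φ Y, Y) = π) (hΦ : DifferentiableAt ℝ Φ Y)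
    (hu : DifferentiableAt ℝ u (Φ Y, Y)) (ht : DifferentiableAt ℝ t (Φ Y, Y))
    (hg : DifferentiableAt ℝ g (t (Φ Y, Y))) (hτ : dY t (Φ Y, Y) ≠ 0)
    (hcurve : (fun s => g (t (Φ s, s))) =ᶠ[𝓝 Y] fun s => -c (u (Φ s, s))) :
    deriv g (t (Φ Y, Y)) =
      -(deriv c (u (Φ Y, Y)) * sin (z (Φ Y, Y))) / (1 + cos (z (Φ Y, Y))) := by
  have hcu : HasDerivAt (fun s => -c (u (Φ s, s))) (-(deriv c (u (Φ Y, Y)) * dY u (Φ Y, Y))) Y :=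
    (hcd.hasDerivAt.comp Y (hasDerivAt_comp_graph_of_dX_eq_zero hu hΦ.hasDerivAt
      (hsys.dX_u_eq_zero hw))).neg
  rw [deriv_eq_div_of_comp_eventuallyEq (T := fun s => t (Φ s, s)) hg
      (hasDerivAt_comp_graph_of_dX_eq_zero ht hΦ.hasDerivAt (hsys.dX_t_eq_zero hw)) hcu hcurve hτ,
    neg_div, mul_div_assoc, hsys.dY_u_div_dY_t hc hq, neg_div, mul_div_assoc]

end SolvesSystem

theorem singular_curve_derivatives_general
    (c : ℝ → ℝ) (c₀ : ℝ) (hc₀ : 0 < c₀) (hc : ContDiff ℝ (⊤ : ℕ∞) c)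
    (hclb : ∀ v, c₀ ≤ c v)
    (u w z p q x t : ℝ × ℝ → ℝ)
    (hsmooth : Smooth7 u w z p q x t)
    (hsys : SolvesSystem c u w z p q x t)
    (X₀ Y₀ : ℝ)
    (hz : Real.cos (z (X₀, Y₀)) > -1) (hq : q (X₀, Y₀) > 0)
    (u₀ z₀ t₀ : ℝ)
    (hu₀ : u₀ = u (X₀, Y₀)) (hz₀ : z₀ = z (X₀, Y₀)) (ht₀ : t₀ = t (X₀, Y₀))
    (Φ : ℝ → ℝ) (δ₁ : ℝ) (hδ₁ : δ₁ > 0)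
    (hΦreg : ContDiffOn ℝ 2 Φ (Metric.ball Y₀ δ₁))
    (hΦ₀ : Φ Y₀ = X₀)
    (hΦw : ∀ Y ∈ Metric.ball Y₀ δ₁, w (Φ Y, Y) = Real.pi)
    (φ : ℝ → ℝ) (δ₂ : ℝ) (hδ₂ : δ₂ > 0)
    (hφreg : ContDiffOn ℝ 2 φ (Metric.ball t₀ δ₂))
    (hφ : ∀ Y ∈ Metric.ball Y₀ δ₁, x (Φ Y, Y) = φ (t (Φ Y, Y))) :
    deriv φ t₀ = -c u₀ ∧
    deriv (deriv φ) t₀ = -(deriv c u₀ * Real.sin z₀) / (1 + Real.cos z₀) := by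
  subst hu₀ hz₀ ht₀ hΦ₀
  obtain ⟨hsu, -, hsz, -, hsq, hsx, hst⟩ := hsmooth
  have hcpos : ∀ v, 0 < c v := fun v => hc₀.trans_le (hclb v)
  have hball₁ : ∀ᶠ Y in 𝓝 Y₀, Y ∈ Metric.ball Y₀ δ₁ := Metric.ball_mem_nhds Y₀ hδ₁
  have hΦdiff : ∀ᶠ Y in 𝓝 Y₀, DifferentiableAt ℝ Φ Y := hball₁.mono fun Y hY =>
    (hΦreg.contDiffAt (Metric.isOpen_ball.mem_nhds hY)).differentiableAt two_ne_zero
  have hγ : ContinuousAt (fun Y => (Φ Y, Y)) Y₀ :=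
    hΦdiff.self_of_nhds.continuousAt.prodMk continuousAt_id
  have hball₂ : ∀ᶠ Y in 𝓝 Y₀, t (Φ Y, Y) ∈ Metric.ball (t (Φ Y₀, Y₀)) δ₂ :=
    hst.continuous.continuousAt.comp hγ (Metric.ball_mem_nhds _ hδ₂)
  have hτ : ∀ᶠ Y in 𝓝 Y₀, 0 < dY t (Φ Y, Y) := hγ.eventually
    (hsys.eventually_dY_t_pos hcpos hsz.continuous.continuousAt hsq.continuous.continuousAt hz hq)
  have hspeed : ∀ᶠ Y in 𝓝 Y₀, deriv φ (t (Φ Y, Y)) = -c (u (Φ Y, Y)) := by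
    filter_upwards [hball₁, hball₂, hΦdiff, hτ] with Y hY₁ hY₂ hΦY hτY
    have hcurve : (fun s => φ (t (Φ s, s))) =ᶠ[𝓝 Y] fun s => x (Φ s, s) := by
      filter_upwards [Metric.isOpen_ball.mem_nhds hY₁] with s hs using (hφ s hs).symm
    exact hsys.deriv_eq_neg_c_of_comp_t_eq_x (hcpos _).ne' (hΦw Y hY₁) hΦY
      (hsx.differentiable (by simp) _) (hst.differentiable (by simp) _)
      ((hφreg.contDiffAt (Metric.isOpen_ball.mem_nhds hY₂)).differentiableAt two_ne_zero)
      hτY.ne' hcurve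
  have hφ' : DifferentiableAt ℝ (deriv φ) (t (Φ Y₀, Y₀)) :=
    ((hφreg.deriv_of_isOpen Metric.isOpen_ball (m := 1) (by norm_num)).contDiffAt
      (Metric.ball_mem_nhds _ hδ₂)).differentiableAt one_ne_zero
  exact ⟨hspeed.self_of_nhds, hsys.deriv_eq_of_comp_t_eq_neg_c (hc.differentiable (by simp) _)
    (hcpos _).ne' hq.ne' (hΦw Y₀ hball₁.self_of_nhds) hΦdiff.self_of_nhds
    (hsu.differentiable (by simp) _) (hst.differentiable (by simp) _) hφ'
    hτ.self_of_nhds.ne' hspeed⟩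

/-- first and second derivatives of the singular curve
`x = φ(t)`, the image in the `(x,t)`-plane of the level set `{w = π}`. -/
theorem singular_curve_derivatives
    (c : ℝ → ℝ) (c₀ : ℝ) (hc₀ : 0 < c₀) (hc : ContDiff ℝ (⊤ : ℕ∞) c)
    (hclb : ∀ v, c₀ ≤ c v)
    (u w z p q x t : ℝ × ℝ → ℝ)
    (hsmooth : Smooth7 u w z p q x t)
    (hsys : SolvesSystem c u w z p q x t)
    (X₀ Y₀ : ℝ) (hwπ : w (X₀, Y₀) = Real.pi)
    (hz : Real.cos (z (X₀, Y₀)) > -1) (hq : q (X₀, Y₀) > 0)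
    (u₀ z₀ t₀ : ℝ)
    (hu₀ : u₀ = u (X₀, Y₀)) (hz₀ : z₀ = z (X₀, Y₀)) (ht₀ : t₀ = t (X₀, Y₀))
    (Φ : ℝ → ℝ) (δ₁ : ℝ) (hδ₁ : δ₁ > 0)
    (hΦreg : ContDiffOn ℝ 2 Φ (Metric.ball Y₀ δ₁))
    (hΦ₀ : Φ Y₀ = X₀)
    (hΦw : ∀ Y ∈ Metric.ball Y₀ δ₁, w (Φ Y, Y) = Real.pi)
    (φ : ℝ → ℝ) (δ₂ : ℝ) (hδ₂ : δ₂ > 0)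
    (hφreg : ContDiffOn ℝ 2 φ (Metric.ball t₀ δ₂))
    (hφ : ∀ Y ∈ Metric.ball Y₀ δ₁, x (Φ Y, Y) = φ (t (Φ Y, Y))) :
    deriv φ t₀ = -c u₀ ∧
    deriv (deriv φ) t₀ = -(deriv c u₀ * Real.sin z₀) / (1 + Real.cos z₀) :=
  singular_curve_derivatives_general c c₀ hc₀ hc hclb u w z p q x t hsmooth hsys X₀ Y₀ hz hq u₀ z₀
    t₀ hu₀ hz₀ ht₀ Φ δ₁ hδ₁ hΦreg hΦ₀ hΦw φ δ₂ hδ₂ hφreg hφ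
end

section
/- Let c : ℝ → ℝ be smooth with c(v) ≥ c₀ > 0, and let u, w, z, p, q, x, t : ℝ² → ℝ be smooth functions solving the semilinear system. Let (X₀,Y₀) be a point where w(X₀,Y₀) = π and w_X(X₀,Y₀) = 0, and write u₀ = u(X₀,Y₀), z₀ = z(X₀,Y₀), p₀ = p(X₀,Y₀), q₀ = q(X₀,Y₀). Then at (X₀,Y₀): u_X = 0; u_XX = 0; u_Y = (sin z₀)·q₀/(4c(u₀)); u_XY = −(c'(u₀)/(32c(u₀)³))·(1+cos z₀)·p₀·q₀; and u_XXX = −w_XX(X₀,Y₀)·p₀/(4c(u₀)). -/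
open Real

section
variable {E : Type*} [NormedAddCommGroup E] [NormedSpace ℝ E] {w g : E → ℝ} {P : E}

theorem fderiv_sin_mul_apply (hw : DifferentiableAt ℝ w P) (hg : DifferentiableAt ℝ g P)
    (v : E) :
    fderiv ℝ (fun Q => sin (w Q) * g Q) P v
      = cos (w P) * fderiv ℝ w P v * g P + sin (w P) * fderiv ℝ g P v := by
  rw [((hw.hasFDerivAt.sin).fun_mul hg.hasFDerivAt).fderiv]
  simp only [add_apply, smul_apply, smul_eq_mul]
  ring

theorem fderiv_sin_mul_apply_of_eq_pi (hw : DifferentiableAt ℝ w P)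
    (hg : DifferentiableAt ℝ g P) (hπ : w P = π) (v : E) :
    fderiv ℝ (fun Q => sin (w Q) * g Q) P v = -(fderiv ℝ w P v * g P) := by
  rw [fderiv_sin_mul_apply hw hg, hπ, sin_pi, cos_pi]
  ring

theorem fderiv_fderiv_sin_mul_apply_of_eq_pi (hw : ContDiff ℝ 2 w) (hg : ContDiff ℝ 2 g)
    {v : E} (hπ : w P = π) (hv : fderiv ℝ w P v = 0) :
    fderiv ℝ (fun Q => fderiv ℝ (fun R => sin (w R) * g R) Q v) P v
      = -(fderiv ℝ (fun Q => fderiv ℝ w Q v) P v * g P) := by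
  have hw1 : Differentiable ℝ w := hw.differentiable two_ne_zero
  have hg1 : Differentiable ℝ g := hg.differentiable two_ne_zero
  have hdw : Differentiable ℝ (fun Q => fderiv ℝ w Q v) :=
    ((hw.fderiv_right le_rfl).clm_apply contDiff_const).differentiable one_ne_zero
  have hdg : Differentiable ℝ (fun Q => fderiv ℝ g Q v) :=
    ((hg.fderiv_right le_rfl).clm_apply contDiff_const).differentiable one_ne_zero
  have hfirst : (fun Q => fderiv ℝ (fun R => sin (w R) * g R) Q v)
      = fun Q => cos (w Q) * fderiv ℝ w Q v * g Q + sin (w Q) * fderiv ℝ g Q v :=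
    funext fun Q => fderiv_sin_mul_apply (hw1 Q) (hg1 Q) v
  rw [hfirst, ((((hw1 P).hasFDerivAt.cos.fun_mul (hdw P).hasFDerivAt).fun_mul
    (hg1 P).hasFDerivAt).fun_add ((hw1 P).hasFDerivAt.sin.fun_mul (hdg P).hasFDerivAt)).fderiv]
  simp only [add_apply, smul_apply, smul_eq_mul, hπ, hv, sin_pi, cos_pi]
  ring
end

/-- partial derivatives of `u` at a Type 2 point
(`w = π`, `w_X = 0`). -/
theorem u_derivatives_at_type2_point
    (c : ℝ → ℝ) (c₀ : ℝ) (hc₀ : 0 < c₀) (hc : ContDiff ℝ (⊤ : ℕ∞) c)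
    (hclb : ∀ v, c₀ ≤ c v)
    (u w z p q x t : ℝ × ℝ → ℝ)
    (hsmooth : Smooth7 u w z p q x t)
    (hsys : SolvesSystem c u w z p q x t)
    (X₀ Y₀ : ℝ) (hwπ : w (X₀, Y₀) = Real.pi) (hwX : dX w (X₀, Y₀) = 0)
    (u₀ z₀ p₀ q₀ : ℝ)
    (hu₀ : u₀ = u (X₀, Y₀)) (hz₀ : z₀ = z (X₀, Y₀))
    (hp₀ : p₀ = p (X₀, Y₀)) (hq₀ : q₀ = q (X₀, Y₀)) :
    dX u (X₀, Y₀) = 0 ∧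
    dX (dX u) (X₀, Y₀) = 0 ∧
    dY u (X₀, Y₀) = Real.sin z₀ * q₀ / (4 * c u₀) ∧
    dY (dX u) (X₀, Y₀)
      = -(deriv c u₀ / (32 * c u₀ ^ 3)) * ((1 + Real.cos z₀) * p₀ * q₀) ∧
    dX (dX (dX u)) (X₀, Y₀) = -(dX (dX w) (X₀, Y₀) * p₀) / (4 * c u₀) := by
  subst hu₀ hz₀ hp₀ hq₀
  obtain ⟨hu, hw, -, hp, -⟩ := hsmooth
  have two_le_top : (2 : WithTop ℕ∞) ≤ ((⊤ : ℕ∞) : WithTop ℕ∞) := WithTop.coe_le_coe.2 le_top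
  have hc4 : ∀ P, 4 * c (u P) ≠ 0 := fun P => by linarith [hclb (u P)]
  set g : ℝ × ℝ → ℝ := fun P => p P / (4 * c (u P))
  have hg : ContDiff ℝ 2 g :=
    (hp.of_le two_le_top).div (contDiff_const.mul ((hc.comp hu).of_le two_le_top)) hc4
  have hw2 : ContDiff ℝ 2 w := hw.of_le two_le_top
  have hdXu : dX u = fun P => sin (w P) * g P :=
    funext fun P => ((hsys P).1).trans (mul_div_assoc _ _ _)
  have hwd : Differentiable ℝ w := hw2.differentiable two_ne_zero
  have hgd : Differentiable ℝ g := hg.differentiable two_ne_zero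
  obtain ⟨hdXu₀, hdYu₀, hdYw₀, -⟩ := hsys (X₀, Y₀)
  refine ⟨?_, ?_, hdYu₀, ?_, ?_⟩
  · rw [hdXu₀, hwπ, sin_pi, zero_mul, zero_div]
  · change fderiv ℝ (dX u) (X₀, Y₀) (1, 0) = 0
    rw [hdXu, fderiv_sin_mul_apply_of_eq_pi (hwd _) (hgd _) hwπ]
    change -(dX w (X₀, Y₀) * g (X₀, Y₀)) = 0
    rw [hwX, zero_mul, neg_zero]
  · change fderiv ℝ (dX u) (X₀, Y₀) (0, 1) = _
    rw [hdXu, fderiv_sin_mul_apply_of_eq_pi (hwd _) (hgd _) hwπ]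
    change -(dY w (X₀, Y₀) * g (X₀, Y₀)) = _
    rw [hdYw₀, hwπ, cos_pi]
    field_simp
    ring
  · change fderiv ℝ (fun Q => fderiv ℝ (dX u) Q (1, 0)) (X₀, Y₀) (1, 0) = _
    rw [hdXu, fderiv_fderiv_sin_mul_apply_of_eq_pi hw2 hg hwπ hwX]
    change -(dX (dX w) (X₀, Y₀) * g (X₀, Y₀)) = _
    ring
end
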